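/- Let (X,d) be a non-separable perfect metric space. Then (ω₁ + 1)^{ω} embeds topologically into (CL(X), τ_{w(d)}). -/

import Mathlib

/-!
A non-separable metric space contains, for some `ε > 0`, an uncountable `ε`-separated set, hence
`ε`-separated points `P (n, β)` indexed by `ℕ × [0, ω₁]`. Perfectness gives points
`q (n, β) ≠ P (n, β)` within `δₙ → 0` of them. A sequence `ξ` is sent to the closed set of all the
`P (n, β)` together with the `q (n, β)` for `β < ξ n`, so `q (n, β)` records whether `β < ξ n`.
The map is Wijsman continuous: the points `q (n, β)` with `n ≥ N` change `d(x, ·)` by at most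
`δ_N`, and on the neighbourhood `{ξ' | ∀ n < N, ξ' n ≤ ξ n}` of `ξ` (every point of `[0, ω₁]`
has a neighbourhood of the form `(α, γ]`) no other points are added. A continuous injection of
the compact space `[0, ω₁]^ω` into the Hausdorff space `(CL X, τ_w)` is an embedding.
-/

/-- The hyperspace of nonempty closed subsets of `X`. -/
def CL (X : Type*) [TopologicalSpace X] : Type _ := {A : Set X // A.Nonempty ∧ IsClosed A}

/-- The Wijsman topology on `CL X`: the weakest topology making `A ↦ d(x, A)`
continuous for every `x : X`. -/
noncomputable def WijsmanTopology (X : Type*) [MetricSpace X] : TopologicalSpace (CL X) :=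
  ⨅ x : X, TopologicalSpace.induced (fun A : CL X => Metric.infDist x A.1) inferInstance

open Set Metric Filter Topology Cardinal

universe u v

section Separation

variable {X : Type u} [MetricSpace X]

theorem exists_uncountable_pairwise_lt_dist (hX : ¬ TopologicalSpace.SeparableSpace X) :
    ∃ ε > 0, ∃ s : Set X, ¬ s.Countable ∧ s.Pairwise fun x y => ε < dist x y := by
  have hfar : ∃ ε > 0, ∀ s : Set X, s.Countable → ∃ x, ∀ y ∈ s, ε < dist x y := by
    by_contra! h
    have := secondCountable_of_almost_dense_set h
    exact hX inferInstance
  obtain ⟨ε, hε, hfar⟩ := hfar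
  obtain ⟨s, hs⟩ := zorn_subset {s : Set X | s.Pairwise fun x y => ε < dist x y}
    fun c hc hchain =>
      ⟨⋃₀ c, (pairwise_sUnion hchain.directedOn).2 hc, fun _ => subset_sUnion_of_mem⟩
  refine ⟨ε, hε, s, fun hcount => ?_, hs.prop⟩
  obtain ⟨x, hx⟩ := hfar s hcount
  have hxs : x ∈ s := hs.mem_of_prop_insert <| pairwise_insert.2
    ⟨hs.prop, fun y hy _ => ⟨hx y hy, dist_comm x y ▸ hx y hy⟩⟩
  simpa [hε.not_gt] using hx x hxs

theorem exists_pairwise_lt_dist_of_mk_le_aleph_one (hX : ¬ TopologicalSpace.SeparableSpace X)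
    {ι : Type v} (hι : #ι ≤ ℵ₁) :
    ∃ ε > 0, ∃ P : ι → X, Pairwise fun i j => ε < dist (P i) (P j) := by
  obtain ⟨ε, hε, s, hs, hsep⟩ := exists_uncountable_pairwise_lt_dist hX
  have hmk : ℵ₁ ≤ #s := by
    rw [← succ_aleph0]
    exact Order.succ_le_of_lt (not_le.1 (mt le_aleph0_iff_set_countable.1 hs))
  obtain ⟨e⟩ : Nonempty (ι ↪ s) := lift_mk_le'.1 <| (lift_le.2 hι).trans (by simpa using hmk)
  exact ⟨ε, hε, fun i => e i,
    hsep.on_injective (Subtype.val_injective.comp e.injective) fun i => (e i).2⟩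

end Separation

theorem exists_ne_dist_lt_of_neBot {X : Type*} [MetricSpace X] {x : X} (hx : (𝓝[≠] x).NeBot)
    {δ : ℝ} (hδ : 0 < δ) : ∃ y ≠ x, dist y x < δ := by
  obtain ⟨y, hy, hxy⟩ := Metric.mem_closure_iff.1 (mem_closure_iff_nhdsWithin_neBot.2 hx) δ hδ
  exact ⟨y, hy, dist_comm x y ▸ hxy⟩

theorem Iic_mem_nhds_self {L : Type*} [LinearOrder L] [TopologicalSpace L] [OrderTopology L]
    [SuccOrder L] (c : L) : Iic c ∈ 𝓝 c := by
  by_cases hc : IsMax c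
  · exact univ_mem' fun _ => not_lt.1 hc.not_lt
  · rw [← Order.Iio_succ_of_not_isMax hc]
    exact Iio_mem_nhds (Order.lt_succ_of_not_isMax hc)

section Clusters

variable {X : Type*} [MetricSpace X] {ι : Type*} {P q : ι → X} {ε : ℝ}

theorem half_lt_dist_of_mem_pair (hP : Pairwise fun i j => ε < dist (P i) (P j))
    (hq : ∀ i, dist (q i) (P i) ≤ ε / 4) {i j : ι} (hij : i ≠ j) {y z : X}
    (hy : y ∈ ({P i, q i} : Set X)) (hz : z ∈ ({P j, q j} : Set X)) : ε / 2 < dist y z := by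
  have hclose : ∀ k, ∀ w ∈ ({P k, q k} : Set X), dist w (P k) ≤ ε / 4 := by
    rintro k w (rfl | rfl)
    · simpa using dist_nonneg.trans (hq k)
    · exact hq k
  have := dist_triangle4 (P i) y z (P j)
  linarith [hP hij, hclose i y hy, hclose j z hz, dist_comm (P i) y]

theorem locallyFinite_pair (hε : 0 < ε) (hP : Pairwise fun i j => ε < dist (P i) (P j))
    (hq : ∀ i, dist (q i) (P i) ≤ ε / 4) : LocallyFinite fun i => ({P i, q i} : Set X) := by
  refine fun x => ⟨ball x (ε / 4), ball_mem_nhds x (by positivity), Subsingleton.finite ?_⟩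
  rintro i ⟨y, hy, hyx⟩ j ⟨z, hz, hzx⟩
  by_contra hij
  have := half_lt_dist_of_mem_pair hP hq hij hy hz
  linarith [dist_triangle_right y z x, mem_ball.1 hyx, mem_ball.1 hzx]

theorem isClosed_of_subset_range_union_range (hε : 0 < ε)
    (hP : Pairwise fun i j => ε < dist (P i) (P j)) (hq : ∀ i, dist (q i) (P i) ≤ ε / 4)
    {T : Set X} (hT : T ⊆ range P ∪ range q) : IsClosed T := by
  have hunion : T = ⋃ i, T ∩ {P i, q i} := by
    refine subset_antisymm (fun y hy => ?_) (iUnion_subset fun i => inter_subset_left)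
    rcases hT hy with ⟨i, rfl⟩ | ⟨i, rfl⟩ <;> exact mem_iUnion.2 ⟨i, hy, by simp⟩
  rw [hunion]
  exact ((locallyFinite_pair hε hP hq).subset fun i => inter_subset_right).isClosed_iUnion
    fun i => (((finite_singleton _).insert _).subset inter_subset_right).isClosed

theorem apply_mem_range_union_image_iff (hε : 0 < ε)
    (hP : Pairwise fun i j => ε < dist (P i) (P j)) (hq : ∀ i, dist (q i) (P i) ≤ ε / 4)
    (hqP : ∀ i, q i ≠ P i) {S : Set ι} {i : ι} :
    q i ∈ range P ∪ q '' S ↔ i ∈ S := by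
  refine ⟨?_, fun hi => Or.inr (mem_image_of_mem q hi)⟩
  have hPmem : ∀ k, P k ∈ ({P k, q k} : Set X) := fun k => mem_insert _ _
  have hqmem : ∀ k, q k ∈ ({P k, q k} : Set X) := fun k => mem_insert_of_mem _ rfl
  rintro (⟨j, hji⟩ | ⟨j, hj, hji⟩) <;> obtain rfl | hij := eq_or_ne j i
  · exact absurd hji.symm (hqP j)
  · have := half_lt_dist_of_mem_pair hP hq hij (hPmem j) (hqmem i)
    rw [hji, dist_self] at this
    linarith
  · exact hj
  · have := half_lt_dist_of_mem_pair hP hq hij (hqmem j) (hqmem i)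
    rw [hji, dist_self] at this
    linarith

end Clusters

section Coding

variable {X : Type*} {L : Type*} [LinearOrder L]

def codingSet (P q : ℕ × L → X) (ξ : ℕ → L) : Set X := range P ∪ q '' {i | i.2 < ξ i.1}

variable {P q : ℕ × L → X}

theorem codingSet_nonempty (ξ : ℕ → L) : (codingSet P q ξ).Nonempty :=
  ⟨P (0, ξ 0), Or.inl (mem_range_self _)⟩

section Topology

variable [TopologicalSpace L] [OrderTopology L]

theorem eventually_mem_codingSet {ξ : ℕ → L} {y : X} (hy : y ∈ codingSet P q ξ) :
    ∀ᶠ ξ' in 𝓝 ξ, y ∈ codingSet P q ξ' := by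
  rcases hy with hy | ⟨⟨n, β⟩, hβ, rfl⟩
  · exact Eventually.of_forall fun _ => Or.inl hy
  · exact ((continuous_apply n).continuousAt.eventually (lt_mem_nhds hβ)).mono
      fun _ h => Or.inr ⟨(n, β), h, rfl⟩

theorem eventually_codingSet_subset [SuccOrder L] (N : ℕ) (ξ : ℕ → L) :
    ∀ᶠ ξ' in 𝓝 ξ, codingSet P q ξ' ⊆ codingSet P q ξ ∪ q '' {i | N ≤ i.1} := by
  have hle : ∀ᶠ ξ' in 𝓝 ξ, ∀ n ∈ Iio N, ξ' n ≤ ξ n := (finite_Iio N).eventually_all.2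
    fun n _ => (continuous_apply n).continuousAt.eventually (Iic_mem_nhds_self (ξ n))
  filter_upwards [hle] with ξ' hle
  rintro y (hy | ⟨⟨n, β⟩, hβ, rfl⟩)
  · exact Or.inl (Or.inl hy)
  · by_cases hn : n < N
    · exact Or.inl (Or.inr ⟨(n, β), hβ.trans_le (hle n hn), rfl⟩)
    · exact Or.inr ⟨(n, β), not_lt.1 hn, rfl⟩

theorem continuous_infDist_codingSet [MetricSpace X] [SuccOrder L] {δ : ℕ → ℝ}
    (hq : ∀ i, dist (q i) (P i) ≤ δ i.1) (hδ : Tendsto δ atTop (𝓝 0)) (x : X) :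
    Continuous fun ξ => infDist x (codingSet P q ξ) := by
  refine continuous_iff_continuousAt.2 fun ξ => continuousAt_iff_lower_upperSemicontinuousAt.2
    ⟨fun r hr => ?_, fun r hr => ?_⟩
  · set D := infDist x (codingSet P q ξ)
    obtain ⟨N, hN⟩ : ∃ N, ∀ n ≥ N, δ n < (D - r) / 2 :=
      eventually_atTop.1 (hδ.eventually (gt_mem_nhds (half_pos (sub_pos.2 hr))))
    filter_upwards [eventually_codingSet_subset (P := P) (q := q) N ξ] with ξ' hsub
    suffices (D + r) / 2 ≤ infDist x (codingSet P q ξ') by change r < D at hr; linarith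
    refine (le_infDist (codingSet_nonempty ξ')).2 fun y hy => ?_
    rcases hsub hy with hy | ⟨⟨n, β⟩, hn, rfl⟩
    · linarith [infDist_le_dist_of_mem (x := x) hy]
    · have hD : D ≤ dist x (P (n, β)) := infDist_le_dist_of_mem (Or.inl (mem_range_self _))
      linarith [dist_triangle x (q (n, β)) (P (n, β)), hq (n, β), hN n hn]
  · obtain ⟨y, hy, hyr⟩ := (infDist_lt_iff (codingSet_nonempty ξ)).1 hr
    exact (eventually_mem_codingSet hy).mono fun _ h => (infDist_le_dist_of_mem h).trans_lt hyr

end Topology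

variable [MetricSpace X] {ε : ℝ}

theorem isClosed_codingSet (hε : 0 < ε) (hP : Pairwise fun i j => ε < dist (P i) (P j))
    (hq : ∀ i, dist (q i) (P i) ≤ ε / 4) (ξ : ℕ → L) : IsClosed (codingSet P q ξ) :=
  isClosed_of_subset_range_union_range hε hP hq <|
    union_subset_union_right _ (image_subset_range _ _)

theorem codingSet_injective (hε : 0 < ε) (hP : Pairwise fun i j => ε < dist (P i) (P j))
    (hq : ∀ i, dist (q i) (P i) ≤ ε / 4) (hqP : ∀ i, q i ≠ P i) :
    Function.Injective (codingSet P q) := by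
  intro ξ ξ' h
  funext n
  refine eq_of_forall_lt_iff fun β => ?_
  have hmem : ∀ ζ : ℕ → L, q (n, β) ∈ codingSet P q ζ ↔ β < ζ n := fun ζ =>
    apply_mem_range_union_image_iff hε hP hq hqP
  rw [← hmem, ← hmem, h]

end Coding

section Wijsman

variable {X : Type*} [MetricSpace X]

theorem CL.ext_infDist {A B : CL X} (h : ∀ x, infDist x A.1 = infDist x B.1) : A = B :=
  Subtype.ext <| ext fun x => by
    rw [A.2.2.mem_iff_infDist_zero A.2.1, B.2.2.mem_iff_infDist_zero B.2.1, h]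

theorem continuous_wijsman_iff {Z : Type*} [TopologicalSpace Z] {f : Z → CL X} :
    Continuous[_, WijsmanTopology X] f ↔ ∀ x, Continuous fun z => infDist x (f z).1 :=
  continuous_iInf_rng.trans (forall_congr' fun _ => continuous_induced_rng)

theorem t2Space_wijsman : @T2Space (CL X) (WijsmanTopology X) :=
  let := WijsmanTopology X
  .of_injective_continuous (f := fun A (x : X) => infDist x A.1)
    (fun _ _ h => CL.ext_infDist (congrFun h))
    (continuous_pi fun _ => continuous_iInf_dom continuous_induced_dom)

theorem exists_isEmbedding_pi_wijsman {L : Type*} [LinearOrder L] [TopologicalSpace L]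
    [OrderTopology L] [SuccOrder L] [CompactSpace L] (hX : ∀ x : X, (𝓝[≠] x).NeBot)
    {ε : ℝ} (hε : 0 < ε) {P : ℕ × L → X} (hP : Pairwise fun i j => ε < dist (P i) (P j)) :
    ∃ f : (ℕ → L) → CL X, @IsEmbedding _ _ _ (WijsmanTopology X) f := by
  let := WijsmanTopology X
  obtain ⟨δ, hδ, hδε, hδ0⟩ : ∃ δ : ℕ → ℝ, (∀ n, 0 < δ n) ∧ (∀ n, δ n ≤ ε / 4) ∧
      Tendsto δ atTop (𝓝 0) :=
    ⟨fun n => ε / 4 / (n + 1), fun n => by positivity,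
      fun n => div_le_self (by positivity) (by simp),
      by simpa [Function.comp_def] using
        (tendsto_const_div_atTop_nhds_zero_nat (ε / 4)).comp (tendsto_add_atTop_nat 1)⟩
  choose q hqP hqδ using fun i : ℕ × L => exists_ne_dist_lt_of_neBot (hX (P i)) (hδ i.1)
  have hq : ∀ i, dist (q i) (P i) ≤ ε / 4 := fun i => (hqδ i).le.trans (hδε i.1)
  let f (ξ : ℕ → L) : CL X := ⟨codingSet P q ξ, codingSet_nonempty ξ, isClosed_codingSet hε hP hq ξ⟩
  have hf : Continuous f := continuous_wijsman_iff.2 <|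
    continuous_infDist_codingSet (fun i => (hqδ i).le) hδ0
  have : T2Space (CL X) := t2Space_wijsman
  refine ⟨f, (hf.isClosedEmbedding fun ξ ξ' h => ?_).isEmbedding⟩
  exact codingSet_injective hε hP hq hqP (congrArg Subtype.val h)

end Wijsman

theorem mk_Iic_ord_aleph_one : #(Iic (ℵ_ 1).ord : Set Ordinal.{u}) = ℵ₁ := by
  rw [← Order.Iio_succ, Cardinal.mk_Iio_ordinal, Order.succ_eq_add_one, Ordinal.card_add_one,
    card_ord, add_one_of_aleph0_le (aleph0_le_aleph 1)]
  simp

/-- If `(X,d)` is a non-separable perfect metric space, then `(ω₁ + 1)^{ω}` embeds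
into `(CL X, τ_{w(d)})`. -/
theorem stmt_17 {X : Type*} [MetricSpace X]
    (hsep : ¬ TopologicalSpace.SeparableSpace X)
    (hperf : ∀ x : X, (nhdsWithin x {x}ᶜ).NeBot) :
    ∃ f : (ℕ → Set.Iic (Cardinal.aleph 1).ord) → CL X,
      @Topology.IsEmbedding _ _ _ (WijsmanTopology X) f := by
  have : CompactSpace (Iic (ℵ_ 1).ord : Set Ordinal) := by
    rw [← Icc_bot]
    exact isCompact_iff_compactSpace.1 isCompact_Icc
  obtain ⟨ε, hε, P, hP⟩ := exists_pairwise_lt_dist_of_mk_le_aleph_one hsep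
    (ι := ℕ × Iic (ℵ_ 1).ord) (by rw [mk_prod, mk_Iic_ord_aleph_one]; simp)
  exact exists_isEmbedding_pi_wijsman hperf hε hP
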